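/- arXiv:1911.11757 — 2 statements merged into one kernel-verified Lean document; each statement's English description precedes it below -/
import Mathlib

section
/- There exist constants C > 0 and L₀ > r₀ such that for every L ≥ L₀ and every triple of distinct indices i, j, k ∈ {1,2,3}, | 2 ∫_{−L}^{L} (2π − β^{⟨k⟩}_t) dt − ( −∫_{F^{(i)}_{+,L}} g_{ij,j} dσ₀ + ∫_{F^{(i)}_{−,L}} g_{ij,j} dσ₀ − ∫_{F^{(j)}_{+,L}} g_{ij,i} dσ₀ + ∫_{F^{(j)}_{−,L}} g_{ij,i} dσ₀ ) | ≤ C·L^{1−2τ}. -/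
open Real MeasureTheory

noncomputable section

/-- Points of ℝ³. -/
abbrev Pt : Type := Fin 3 → ℝ

/-- The Euclidean norm |x| on ℝ³. -/
def enorm3 (x : Pt) : ℝ := Real.sqrt (∑ i, x i ^ 2)

/-- The sign μ ∈ {+,-} as a real number. -/
def sgn (μ : Bool) : ℝ := if μ then 1 else -1

/-- The smaller of the two indices different from `i`. -/
def lo (i : Fin 3) : Fin 3 := if i = 0 then 1 else 0

/-- The larger of the two indices different from `i`. -/
def hi (i : Fin 3) : Fin 3 := if i = 2 then 1 else 2

/-- The index different from both `i` and `a` (when `i ≠ a`). -/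
def oth (i a : Fin 3) : Fin 3 := -(i + a)

/-- The partial derivative ∂ₖ g_{ij}. -/
def dg (g : Pt → Matrix (Fin 3) (Fin 3) ℝ) (i j k : Fin 3) (x : Pt) : ℝ :=
  fderiv ℝ (fun y => g y i j) x (Pi.single k 1)

/-- The second partial derivative ∂ₗ ∂ₖ g_{ij}. -/
def ddg (g : Pt → Matrix (Fin 3) (Fin 3) ℝ) (i j k l : Fin 3) (x : Pt) : ℝ :=
  fderiv ℝ (dg g i j k) x (Pi.single l 1)

/-- The Christoffel symbols Γ^m_{ab} of the metric g. -/
def chris (g : Pt → Matrix (Fin 3) (Fin 3) ℝ) (m a b : Fin 3) (x : Pt) : ℝ :=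
  (1/2) * ∑ n, (g x)⁻¹ m n * (dg g n a b x + dg g n b a x - dg g a b n x)

/-- The asymptotic flatness hypotheses: on U = {|x| > r₀}, g is a symmetric
positive-definite C² matrix field with |g_{ij} - δ_{ij}| ≤ C₀|x|^{-τ},
|∂g| ≤ C₀|x|^{-τ-1}, |∂∂g| ≤ C₀|x|^{-τ-2}. -/
def AsymptFlat (τ r₀ C₀ : ℝ) (g : Pt → Matrix (Fin 3) (Fin 3) ℝ) : Prop :=
  (∀ x : Pt, r₀ < enorm3 x → (g x).IsSymm) ∧
  (∀ x : Pt, r₀ < enorm3 x → (g x).PosDef) ∧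
  (∀ i j : Fin 3, ContDiffOn ℝ 2 (fun x => g x i j) {x : Pt | r₀ < enorm3 x}) ∧
  (∀ x : Pt, r₀ < enorm3 x → ∀ i j : Fin 3,
    |g x i j - if i = j then 1 else 0| ≤ C₀ * enorm3 x ^ (-τ)) ∧
  (∀ x : Pt, r₀ < enorm3 x → ∀ i j k : Fin 3,
    |dg g i j k x| ≤ C₀ * enorm3 x ^ (-τ - 1)) ∧
  (∀ x : Pt, r₀ < enorm3 x → ∀ i j k l : Fin 3,
    |ddg g i j k l x| ≤ C₀ * enorm3 x ^ (-τ - 2))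

/-- The point of the face x^i = a with the two remaining coordinates
(in increasing order of index) equal to s and u. -/
def facePt (i : Fin 3) (a s u : ℝ) : Pt :=
  fun m => if m = i then a else if m = lo i then s else u

/-- The point of the edge x^i = a, x^j = b (i ≠ j) with remaining coordinate t. -/
def edgePt (i j : Fin 3) (a b t : ℝ) : Pt :=
  fun m => if m = i then a else if m = j then b else t

/-- ∫_{F^{(i)}_{μ,L}} f dσ₀ : the integral of f over the face F^{(i)}_{μ,L} of
∂Cube_L with respect to 2-dimensional Lebesgue measure. -/
def faceInt (i : Fin 3) (μ : Bool) (L : ℝ) (f : Pt → ℝ) : ℝ :=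
  ∫ s in (-L)..L, ∫ u in (-L)..L, f (facePt i (sgn μ * L) s u)

/-- det h, where h is the 2×2 submatrix of g obtained by deleting row and column i. -/
def hdet (g : Pt → Matrix (Fin 3) (Fin 3) ℝ) (i : Fin 3) (x : Pt) : ℝ :=
  g x (lo i) (lo i) * g x (hi i) (hi i) - g x (lo i) (hi i) * g x (hi i) (lo i)

/-- The area density √(det h) of dσ_g on the face with normal direction i. -/
def areaDens (g : Pt → Matrix (Fin 3) (Fin 3) ℝ) (i : Fin 3) (x : Pt) : ℝ :=
  Real.sqrt (hdet g i x)

/-- The entries (h⁻¹)^{ab} of the inverse of the 2×2 submatrix h of g obtained by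
deleting row and column i (meaningful for a, b ≠ i). -/
def hinv (g : Pt → Matrix (Fin 3) (Fin 3) ℝ) (i a b : Fin 3) (x : Pt) : ℝ :=
  (if a = b then g x (oth i a) (oth i a) else -(g x a b)) / hdet g i x

/-- The components ν^m = μ g^{mi}/√(g^{ii}) of the outward g-unit normal of the
face x^i = μL. -/
def nuc (g : Pt → Matrix (Fin 3) (Fin 3) ℝ) (i : Fin 3) (μ : Bool) (m : Fin 3) (x : Pt) : ℝ :=
  sgn μ * (g x)⁻¹ m i / Real.sqrt ((g x)⁻¹ i i)

/-- The mean curvature H = -Σ_{a,b≠i} (h⁻¹)^{ab} Σ_{m,n} Γ^m_{ab} g_{mn} ν^n of the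
face F^{(i)}_{μ,L} with respect to the outward unit normal ν. -/
def meanCurv (g : Pt → Matrix (Fin 3) (Fin 3) ℝ) (i : Fin 3) (μ : Bool) (x : Pt) : ℝ :=
  -∑ a, ∑ b, (if a = i ∨ b = i then 0 else
    hinv g i a b x * ∑ m, ∑ n, chris g m a b x * g x m n * nuc g i μ n x)

/-- The integrand Σ_{j,k}(g_{jk,j} - g_{jj,k}) ν^k of the ADM mass surface integral. -/
def admIntegrand (g : Pt → Matrix (Fin 3) (Fin 3) ℝ) (i : Fin 3) (μ : Bool) (x : Pt) : ℝ :=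
  ∑ j, ∑ k, (dg g j k j x - dg g j j k x) * nuc g i μ k x

/-- B(L): the ADM mass surface integral of g over ∂Cube_L. -/
def ADM (g : Pt → Matrix (Fin 3) (Fin 3) ℝ) (L : ℝ) : ℝ :=
  (1/(16*π)) * ∑ i, ∑ μ : Bool,
    faceInt i μ L (fun x => admIntegrand g i μ x * areaDens g i x)

/-- The angle θ^{(ij)}_{μ,λ} = arccos(μλ g^{ij}/√(g^{ii} g^{jj})) between the outward
unit normals of the two faces adjacent along the edge E^{(ij)}_{μ,λ,L}. -/
def thetaAngle (g : Pt → Matrix (Fin 3) (Fin 3) ℝ) (i j : Fin 3) (μ lam : Bool) (x : Pt) : ℝ :=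
  Real.arccos (sgn μ * sgn lam * (g x)⁻¹ i j / Real.sqrt ((g x)⁻¹ i i * (g x)⁻¹ j j))

/-- ∫_{E^{(ij)}_{μ,λ,L}} f ds_g : the integral of f over the edge x^i = μL, x^j = λL
of ∂Cube_L, with arclength element ds_g = √(g_{cc}) dt, c being the remaining index. -/
def edgeInt (g : Pt → Matrix (Fin 3) (Fin 3) ℝ) (i j : Fin 3) (μ lam : Bool) (L : ℝ)
    (f : Pt → ℝ) : ℝ :=
  ∫ t in (-L)..L, f (edgePt i j (sgn μ * L) (sgn lam * L) t) *
    Real.sqrt (g (edgePt i j (sgn μ * L) (sgn lam * L) t) (oth i j) (oth i j))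

/-- The components of the outward g-unit normal ν̄ of the slicing curve C^{(k)}_t
within the plane x^k = t, along its segment lying in the face x^i = μL:
ν̄^a = μ (h⁻¹)^{ai}/√((h⁻¹)^{ii}) for a ≠ k, ν̄^k = 0, h being the 2×2 submatrix
of g deleting row and column k. -/
def nubar (g : Pt → Matrix (Fin 3) (Fin 3) ℝ) (i k : Fin 3) (μ : Bool) (n : Fin 3)
    (x : Pt) : ℝ :=
  if n = k then 0 else sgn μ * hinv g k n i x / Real.sqrt (hinv g k i i x)

/-- The geodesic curvature κ^{(k)} = -(1/g_{jj}) Σ_{m,n} Γ^m_{jj} g_{mn} ν̄^n of the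
slicing curve C^{(k)}_t within the plane x^k = t, along its segment lying in the face
x^i = μL; here j = oth i k is the tangent coordinate direction. -/
def geodCurv (g : Pt → Matrix (Fin 3) (Fin 3) ℝ) (i k : Fin 3) (μ : Bool) (x : Pt) : ℝ :=
  -(1 / g x (oth i k) (oth i k)) *
    ∑ m, ∑ n, chris g m (oth i k) (oth i k) x * g x m n * nubar g i k μ n x

/-- ∫_{C^{(k)}_t} κ^{(k)} ds_g : the integral of the geodesic curvature of the slicing
curve C^{(k)}_t = ∂Cube_L ∩ {x^k = t}, as the sum over its four segments. -/
def curveCurvInt (g : Pt → Matrix (Fin 3) (Fin 3) ℝ) (k : Fin 3) (t L : ℝ) : ℝ :=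
  ∑ i, ∑ μ : Bool, if i = k then 0 else
    ∫ s in (-L)..L,
      geodCurv g i k μ (edgePt i k (sgn μ * L) t s) *
        Real.sqrt (g (edgePt i k (sgn μ * L) t s) (oth i k) (oth i k))

/-- The turning angle arccos(-μλ g_{ij}/√(g_{ii} g_{jj})) of the slicing curve
C^{(k)}_t at its vertex (x^i, x^j) = (μL, λL), where {i,j} = {1,2,3} \ {k}. -/
def turnAngle (g : Pt → Matrix (Fin 3) (Fin 3) ℝ) (k : Fin 3) (μ lam : Bool)
    (t L : ℝ) : ℝ :=
  Real.arccos (-(sgn μ * sgn lam) *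
      g (edgePt (lo k) (hi k) (sgn μ * L) (sgn lam * L) t) (lo k) (hi k) /
    Real.sqrt (g (edgePt (lo k) (hi k) (sgn μ * L) (sgn lam * L) t) (lo k) (lo k) *
               g (edgePt (lo k) (hi k) (sgn μ * L) (sgn lam * L) t) (hi k) (hi k)))

/-- β^{⟨k⟩}_t : the sum of the four turning angles of the slicing curve C^{(k)}_t. -/
def betaSum (g : Pt → Matrix (Fin 3) (Fin 3) ℝ) (k : Fin 3) (t L : ℝ) : ℝ :=
  ∑ μ : Bool, ∑ lam : Bool, turnAngle g k μ lam t L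

/-- The g-Laplacian Δ_g x^k = -Σ_{a,b} g^{ab} Γ^k_{ab} of the coordinate function x^k. -/
def lapCoord (g : Pt → Matrix (Fin 3) (Fin 3) ℝ) (k : Fin 3) (x : Pt) : ℝ :=
  -∑ a, ∑ b, (g x)⁻¹ a b * chris g k a b x

/-- The directional derivative ∂_m √(g^{kk}) of |∇x^k| = √(g^{kk}). -/
def dlenGrad (g : Pt → Matrix (Fin 3) (Fin 3) ℝ) (k m : Fin 3) (x : Pt) : ℝ :=
  fderiv ℝ (fun y => Real.sqrt ((g y)⁻¹ k k)) x (Pi.single m 1)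

/-!
Since `arccos = π/2 - arcsin`, the defect `2π - β^{⟨k⟩}_t` is `-∑ arcsin (μλ g_{ij}/√(g_{ii} g_{jj}))`
over the four vertices, and each term is `μλ g_{ij}` up to `O(|g - δ|²) = O(L^{-2τ})`.
On the other side, integrating `g_{ij,j}` over `F^{(i)}_{±,L}` in the `x^j`-direction leaves the
values of `g_{ij}` on the edges, and the four face integrals add up to
`-2 ∑ μλ ∫ g_{ij}` along the four edges parallel to `x^k`, which is exactly the linear part of
`2 ∫ (2π - β^{⟨k⟩}_t) dt`. The remaining error, `O(L^{-2τ})` on an interval of length `2L`,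
is `O(L^{1-2τ})`.
-/

section Coordinates

lemma continuous_enorm3 : Continuous enorm3 := by
  unfold enorm3
  fun_prop

lemma abs_apply_le_enorm3 (x : Pt) (m : Fin 3) : |x m| ≤ enorm3 x := by
  rw [← Real.sqrt_sq_eq_abs]
  exact Real.sqrt_le_sqrt (Finset.single_le_sum (f := fun m => x m ^ 2)
    (fun _ _ => sq_nonneg _) (Finset.mem_univ m))

lemma abs_le_enorm3_facePt (i : Fin 3) (a s u : ℝ) : |a| ≤ enorm3 (facePt i a s u) := by
  simpa [facePt] using abs_apply_le_enorm3 (facePt i a s u) i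

lemma abs_le_enorm3_edgePt (i j : Fin 3) (a b t : ℝ) : |a| ≤ enorm3 (edgePt i j a b t) := by
  simpa [edgePt] using abs_apply_le_enorm3 (edgePt i j a b t) i

@[simp] lemma sgn_true : sgn true = 1 := rfl

@[simp] lemma sgn_false : sgn false = -1 := rfl

lemma abs_sgn (μ : Bool) : |sgn μ| = 1 := by
  cases μ <;> simp

lemma abs_sgn_mul (μ : Bool) (L : ℝ) : |sgn μ * L| = |L| := by
  cases μ <;> simp [sgn]

lemma lo_ne_hi : ∀ k : Fin 3, lo k ≠ hi k := by decide

lemma eq_lo_or_eq_hi_of_ne : ∀ {i j : Fin 3}, j ≠ i → j = lo i ∨ j = hi i := by decide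

lemma eq_lo_hi_or_eq_hi_lo : ∀ {i j k : Fin 3}, i ≠ j → i ≠ k → j ≠ k →
    (i = lo k ∧ j = hi k) ∨ (i = hi k ∧ j = lo k) := by decide

lemma facePt_eq_add_lo (i : Fin 3) (a s u : ℝ) :
    facePt i a s u = facePt i a 0 u + s • Pi.single (lo i) 1 := by
  funext m
  fin_cases i <;> fin_cases m <;> simp [facePt, lo]

lemma facePt_eq_add_hi (i : Fin 3) (a s u : ℝ) :
    facePt i a s u = facePt i a s 0 + u • Pi.single (hi i) 1 := by
  funext m
  fin_cases i <;> fin_cases m <;> simp [facePt, lo, hi]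

lemma facePt_eq_edgePt_lo (i : Fin 3) (a b u : ℝ) :
    facePt i a b u = edgePt i (lo i) a b u := by
  funext m
  fin_cases i <;> fin_cases m <;> simp [facePt, edgePt, lo]

lemma facePt_eq_edgePt_hi (i : Fin 3) (a s b : ℝ) :
    facePt i a s b = edgePt i (hi i) a b s := by
  funext m
  fin_cases i <;> fin_cases m <;> simp [facePt, edgePt, lo, hi]

lemma edgePt_comm {i j : Fin 3} (h : i ≠ j) (a b t : ℝ) :
    edgePt i j a b t = edgePt j i b a t := by
  funext m
  simp only [edgePt]
  split_ifs <;> simp_all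

lemma continuous_facePt (i : Fin 3) (a : ℝ) :
    Continuous fun p : ℝ × ℝ => facePt i a p.1 p.2 := by
  refine continuous_pi fun m => ?_
  simp only [facePt]
  split_ifs <;> fun_prop

lemma continuous_edgePt (i j : Fin 3) (a b : ℝ) : Continuous (edgePt i j a b) := by
  refine continuous_pi fun m => ?_
  simp only [edgePt]
  split_ifs <;> fun_prop

lemma ContinuousOn.comp_edgePt {F : Pt → ℝ} {r a : ℝ} (hF : ContinuousOn F {x | r < enorm3 x})
    (ha : r < |a|) (i j : Fin 3) (b : ℝ) : Continuous fun t => F (edgePt i j a b t) :=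
  hF.comp_continuous (continuous_edgePt i j a b) fun t =>
    ha.trans_le (abs_le_enorm3_edgePt i j a b t)

end Coordinates

section FundamentalTheorem

lemma integral_fderiv_apply_line {E : Type*} [NormedAddCommGroup E] [NormedSpace ℝ E]
    {f : E → ℝ} {U : Set E} (hU : IsOpen U) (hf : ContDiffOn ℝ 1 f U) (x v : E) {a b : ℝ}
    (hseg : ∀ s ∈ Set.uIcc a b, x + s • v ∈ U) :
    ∫ s in a..b, fderiv ℝ f (x + s • v) v = f (x + b • v) - f (x + a • v) := by
  have hline : Continuous fun s : ℝ => x + s • v := by fun_prop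
  refine intervalIntegral.integral_eq_sub_of_hasDerivAt (f := fun s => f (x + s • v))
    (fun s hs => ?_) ?_
  · have hfx := ((hf.differentiableOn one_ne_zero).differentiableAt
      (hU.mem_nhds (hseg s hs))).hasFDerivAt
    simpa [Function.comp_def] using
      hfx.comp_hasDerivAt s (((hasDerivAt_id s).smul_const v).const_add x)
  · exact (((hf.continuousOn_fderiv_of_isOpen hU le_rfl).comp hline.continuousOn hseg).clm_apply
      continuousOn_const).intervalIntegrable

lemma faceInt_fderiv_eq {f : Pt → ℝ} {U : Set Pt} (hU : IsOpen U) (hf : ContDiffOn ℝ 1 f U)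
    {c d : Fin 3} (hdc : d ≠ c) (μ : Bool) (L : ℝ)
    (hface : ∀ s ∈ Set.uIcc (-L) L, ∀ u ∈ Set.uIcc (-L) L, facePt c (sgn μ * L) s u ∈ U) :
    faceInt c μ L (fun x => fderiv ℝ f x (Pi.single d 1)) =
      ∫ t in (-L)..L, (f (edgePt c d (sgn μ * L) L t) - f (edgePt c d (sgn μ * L) (-L) t)) := by
  rcases eq_lo_or_eq_hi_of_ne hdc with rfl | rfl
  · have hcont : ContinuousOn (Function.uncurry fun s u => fderiv ℝ f (facePt c (sgn μ * L) s u)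
        (Pi.single (lo c) 1)) (Set.uIcc (-L) L ×ˢ Set.uIcc (-L) L) :=
      ((hf.continuousOn_fderiv_of_isOpen hU le_rfl).comp (continuous_facePt c _).continuousOn
        fun p hp => hface p.1 hp.1 p.2 hp.2).clm_apply continuousOn_const
    rw [faceInt, MeasureTheory.intervalIntegral_intervalIntegral_swap
      ((hcont.integrableOn_compact (isCompact_uIcc.prod isCompact_uIcc)).mono_set
        (Set.prod_mono Set.uIoc_subset_uIcc Set.uIoc_subset_uIcc))]
    refine intervalIntegral.integral_congr fun u hu => ?_
    have hftc := integral_fderiv_apply_line hU hf (facePt c (sgn μ * L) 0 u) (Pi.single (lo c) 1)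
      fun s hs => by rw [← facePt_eq_add_lo]; exact hface s hs u hu
    simp only [← facePt_eq_add_lo] at hftc
    simpa only [facePt_eq_edgePt_lo] using hftc
  · refine intervalIntegral.integral_congr fun s hs => ?_
    have hftc := integral_fderiv_apply_line hU hf (facePt c (sgn μ * L) s 0) (Pi.single (hi c) 1)
      fun u hu => by rw [← facePt_eq_add_hi]; exact hface s hs u hu
    simp only [← facePt_eq_add_hi] at hftc
    simpa only [facePt_eq_edgePt_hi] using hftc

end FundamentalTheorem

section Arcsin

lemma arcsin_sub_self_mem_of_nonneg {y : ℝ} (h0 : 0 ≤ y) (h : y ≤ 1 / 2) :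
    0 ≤ Real.arcsin y - y ∧ Real.arcsin y - y ≤ y ^ 3 := by
  set x := Real.arcsin y
  have hx0 : 0 ≤ x := Real.arcsin_nonneg.2 h0
  have hsin : Real.sin x = y := Real.sin_arcsin (by linarith) (by linarith)
  have hsin1 : 5 / 6 ≤ Real.sin 1 := by
    have := Real.sin_ge_sub_cube zero_le_one; norm_num at this; linarith
  have hx1 : x ≤ 1 := (Real.arcsin_le_iff_le_sin ⟨by linarith, by linarith⟩
      ⟨by linarith [Real.pi_gt_three], by linarith [Real.pi_gt_three]⟩).2 (by linarith)
  have hyx : y ≤ x := hsin ▸ Real.sin_le hx0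
  have hcube : x - x ^ 3 / 6 ≤ y := hsin ▸ Real.sin_ge_sub_cube hx0
  -- `y ≥ x - x³/6 ≥ 5x/6`, so `x - y ≤ x³/6 ≤ (6/5)³ y³ / 6`
  have hxy : x ≤ 6 / 5 * y := by
    nlinarith [mul_le_mul_of_nonneg_left (pow_le_one₀ hx0 hx1 : x ^ 2 ≤ 1) hx0]
  have : x ^ 3 ≤ (6 / 5 * y) ^ 3 := pow_le_pow_left₀ hx0 hxy 3
  constructor <;> nlinarith

lemma abs_arcsin_sub_self_le {y : ℝ} (h : |y| ≤ 1 / 2) : |Real.arcsin y - y| ≤ |y| ^ 3 := by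
  rcases le_or_gt 0 y with h0 | h0
  · rw [abs_of_nonneg h0] at h ⊢
    obtain ⟨hlo, hhi⟩ := arcsin_sub_self_mem_of_nonneg h0 h
    exact abs_le.2 ⟨by linarith, hhi⟩
  · rw [abs_of_neg h0] at h ⊢
    obtain ⟨hlo, hhi⟩ := arcsin_sub_self_mem_of_nonneg (neg_nonneg.2 h0.le) h
    rw [Real.arcsin_neg] at hlo hhi
    exact abs_le.2 ⟨by linarith, by linarith⟩

lemma abs_arcsin_div_sqrt_mul_sub_le {ε A B E : ℝ} (hε : ε ≤ 1 / 4) (hA : |A - 1| ≤ ε)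
    (hB : |B - 1| ≤ ε) (hE : |E| ≤ ε) :
    |Real.arcsin (E / √(A * B)) - E| ≤ 2 * ε ^ 2 := by
  have hε0 : 0 ≤ ε := (abs_nonneg _).trans hA
  rw [abs_le] at hA hB
  set S := √(A * B)
  have hS_lo : 1 - ε ≤ S := (Real.le_sqrt (by linarith) (by nlinarith)).2 (by nlinarith)
  have hS_hi : S ≤ 1 + ε := (Real.sqrt_le_left (by linarith)).2 (by nlinarith)
  have hS0 : 0 < S := by linarith
  set z := E / S
  have hz : |z| ≤ 4 / 3 * ε := by
    rw [abs_div, abs_of_pos hS0, div_le_iff₀ hS0]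
    nlinarith [abs_nonneg E]
  have hzE : |z - E| ≤ 4 / 3 * ε ^ 2 := by
    have : z - E = z * (1 - S) := by simp only [z]; field_simp
    rw [this, abs_mul]
    calc |z| * |1 - S| ≤ 4 / 3 * ε * ε :=
          mul_le_mul hz (abs_le.2 ⟨by linarith, by linarith⟩) (abs_nonneg _) (by positivity)
      _ = 4 / 3 * ε ^ 2 := by ring
  have harc : |Real.arcsin z - z| ≤ |z| ^ 3 := abs_arcsin_sub_self_le (by linarith)
  have hz3 : |z| ^ 3 ≤ 2 / 3 * ε ^ 2 := by
    have := pow_le_pow_left₀ (abs_nonneg z) hz 3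
    nlinarith
  calc |Real.arcsin z - E| ≤ |Real.arcsin z - z| + |z - E| := abs_sub_le _ _ _
    _ ≤ 2 * ε ^ 2 := by linarith

end Arcsin

section TurningAngles

variable (g : Pt → Matrix (Fin 3) (Fin 3) ℝ)

def coordCos (a b : Fin 3) (x : Pt) : ℝ := g x a b / √(g x a a * g x b b)

lemma turnAngle_eq (k : Fin 3) (μ lam : Bool) (t L : ℝ) :
    turnAngle g k μ lam t L = π / 2 + Real.arcsin (sgn μ * sgn lam *
      coordCos g (lo k) (hi k) (edgePt (lo k) (hi k) (sgn μ * L) (sgn lam * L) t)) := by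
  rw [turnAngle, Real.arccos_eq_pi_div_two_sub_arcsin, neg_mul, neg_div, Real.arcsin_neg,
    coordCos, mul_div_assoc]
  ring

lemma two_pi_sub_betaSum (k : Fin 3) (t L : ℝ) :
    2 * π - betaSum g k t L = -∑ μ : Bool, ∑ lam : Bool, Real.arcsin (sgn μ * sgn lam *
      coordCos g (lo k) (hi k) (edgePt (lo k) (hi k) (sgn μ * L) (sgn lam * L) t)) := by
  simp only [betaSum, turnAngle_eq, Fintype.sum_bool]
  ring

def signedEdgeSum (i j : Fin 3) (L : ℝ) : ℝ :=
  ∑ μ : Bool, ∑ lam : Bool,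
    sgn μ * sgn lam * ∫ t in (-L)..L, g (edgePt i j (sgn μ * L) (sgn lam * L) t) i j

end TurningAngles

namespace AsymptFlat

variable {τ r₀ C₀ L : ℝ} {g : Pt → Matrix (Fin 3) (Fin 3) ℝ}

lemma continuousOn_entry (hg : AsymptFlat τ r₀ C₀ g) (a b : Fin 3) :
    ContinuousOn (fun x => g x a b) {x | r₀ < enorm3 x} :=
  (hg.2.2.1 a b).continuousOn

lemma continuousOn_coordCos (hg : AsymptFlat τ r₀ C₀ g) (a b : Fin 3) :
    ContinuousOn (coordCos g a b) {x | r₀ < enorm3 x} :=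
  (hg.continuousOn_entry a b).div
    ((hg.continuousOn_entry a a).mul (hg.continuousOn_entry b b)).sqrt fun x hx =>
      (Real.sqrt_pos.2 (mul_pos (hg.2.1 x hx).diag_pos (hg.2.1 x hx).diag_pos)).ne'

lemma abs_sub_ite_le (hg : AsymptFlat τ r₀ C₀ g) (hτ : 0 ≤ τ) (hC₀ : 0 ≤ C₀) (hL0 : 0 < L)
    (hL : r₀ < L) {x : Pt} (hx : L ≤ enorm3 x) (a b : Fin 3) :
    |g x a b - if a = b then 1 else 0| ≤ C₀ * L ^ (-τ) :=
  (hg.2.2.2.1 x (hL.trans_le hx) a b).trans <| mul_le_mul_of_nonneg_left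
    (Real.rpow_le_rpow_of_nonpos hL0 hx (neg_nonpos.2 hτ)) hC₀

lemma faceInt_dg_eq (hg : AsymptFlat τ r₀ C₀ g) (hL : r₀ < L) {c d : Fin 3} (hdc : d ≠ c)
    (μ : Bool) (p q : Fin 3) :
    faceInt c μ L (fun x => dg g p q d x) =
      ∫ t in (-L)..L, (g (edgePt c d (sgn μ * L) L t) p q - g (edgePt c d (sgn μ * L) (-L) t) p q) :=
  faceInt_fderiv_eq (isOpen_lt continuous_const continuous_enorm3)
    ((hg.2.2.1 p q).of_le (by norm_num)) hdc μ L fun s _ u _ =>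
      (hL.trans_le (le_abs_self L)).trans_le <| by
        simpa only [abs_sgn_mul] using abs_le_enorm3_facePt c (sgn μ * L) s u

lemma faceInt_combination_eq (hg : AsymptFlat τ r₀ C₀ g) (hL : r₀ < L) {i j : Fin 3}
    (hij : i ≠ j) :
    -(faceInt i true L (fun x => dg g i j j x)) + faceInt i false L (fun x => dg g i j j x)
      - faceInt j true L (fun x => dg g i j i x) + faceInt j false L (fun x => dg g i j i x)
      = -2 * signedEdgeSum g i j L := by
  have hint : ∀ {a : ℝ}, |a| = |L| → ∀ b : ℝ,
      IntervalIntegrable (fun t => g (edgePt i j a b t) i j) MeasureTheory.volume (-L) L :=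
    fun ha b => ((hg.continuousOn_entry i j).comp_edgePt
      (ha ▸ hL.trans_le (le_abs_self L)) i j b).intervalIntegrable _ _
  have hL' : |-L| = |L| := abs_neg L
  rw [hg.faceInt_dg_eq hL hij.symm, hg.faceInt_dg_eq hL hij.symm,
    hg.faceInt_dg_eq hL hij, hg.faceInt_dg_eq hL hij]
  simp only [edgePt_comm hij.symm, sgn_true, sgn_false, one_mul, neg_one_mul]
  rw [intervalIntegral.integral_sub (hint rfl _) (hint rfl _),
    intervalIntegral.integral_sub (hint hL' _) (hint hL' _),
    intervalIntegral.integral_sub (hint rfl _) (hint hL' _),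
    intervalIntegral.integral_sub (hint rfl _) (hint hL' _)]
  simp only [signedEdgeSum, Fintype.sum_bool, sgn_true, sgn_false, one_mul, neg_one_mul]
  ring

lemma signedEdgeSum_comm (hg : AsymptFlat τ r₀ C₀ g) (hL : r₀ < L) {i j : Fin 3}
    (hij : i ≠ j) : signedEdgeSum g j i L = signedEdgeSum g i j L := by
  rw [signedEdgeSum, Finset.sum_comm]
  refine Finset.sum_congr rfl fun lam _ => Finset.sum_congr rfl fun μ _ => ?_
  rw [mul_comm (sgn μ)]
  congr 1
  refine intervalIntegral.integral_congr fun t _ => ?_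
  have hx : r₀ < enorm3 (edgePt i j (sgn lam * L) (sgn μ * L) t) :=
    (hL.trans_le (le_abs_self L)).trans_le <| by
      simpa only [abs_sgn_mul] using abs_le_enorm3_edgePt i j (sgn lam * L) (sgn μ * L) t
  rw [edgePt_comm hij.symm]
  exact (hg.1 _ hx).apply i j

lemma continuous_arcsin_coordCos (hg : AsymptFlat τ r₀ C₀ g) (hL : r₀ < L) (k : Fin 3)
    (μ lam : Bool) (c : ℝ) :
    Continuous fun t => Real.arcsin
      (c * coordCos g (lo k) (hi k) (edgePt (lo k) (hi k) (sgn μ * L) (sgn lam * L) t)) :=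
  Real.continuous_arcsin.comp <| continuous_const.mul <|
    (hg.continuousOn_coordCos _ _).comp_edgePt
      (by simpa only [abs_sgn_mul] using hL.trans_le (le_abs_self L)) _ _ _

lemma integral_two_pi_sub_betaSum (hg : AsymptFlat τ r₀ C₀ g) (hL : r₀ < L) (k : Fin 3) :
    ∫ t in (-L)..L, (2 * π - betaSum g k t L) =
      -∑ μ : Bool, ∑ lam : Bool, ∫ t in (-L)..L, Real.arcsin (sgn μ * sgn lam *
        coordCos g (lo k) (hi k) (edgePt (lo k) (hi k) (sgn μ * L) (sgn lam * L) t)) := by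
  simp only [two_pi_sub_betaSum]
  rw [intervalIntegral.integral_neg, intervalIntegral.integral_finsetSum fun μ _ =>
    Continuous.intervalIntegrable (continuous_finsetSum _ fun lam _ =>
      hg.continuous_arcsin_coordCos hL k μ lam _) _ _]
  congr 1
  refine Finset.sum_congr rfl fun μ _ => intervalIntegral.integral_finsetSum fun lam _ => ?_
  exact (hg.continuous_arcsin_coordCos hL k μ lam _).intervalIntegrable _ _

lemma abs_integral_arcsin_coordCos_sub_le (hg : AsymptFlat τ r₀ C₀ g) (hτ : 0 ≤ τ)
    (hC₀ : 0 ≤ C₀) (hL0 : 0 < L) (hL : r₀ < L) (hε : C₀ * L ^ (-τ) ≤ 1 / 4) (k : Fin 3)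
    (μ lam : Bool) :
    |(∫ t in (-L)..L, Real.arcsin (sgn μ * sgn lam *
        coordCos g (lo k) (hi k) (edgePt (lo k) (hi k) (sgn μ * L) (sgn lam * L) t)))
      - sgn μ * sgn lam *
        ∫ t in (-L)..L, g (edgePt (lo k) (hi k) (sgn μ * L) (sgn lam * L) t) (lo k) (hi k)|
      ≤ 4 * C₀ ^ 2 * L ^ (1 - 2 * τ) := by
  have hx : ∀ t, L ≤ enorm3 (edgePt (lo k) (hi k) (sgn μ * L) (sgn lam * L) t) := fun t => by
    simpa only [abs_sgn_mul, abs_of_pos hL0] using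
      abs_le_enorm3_edgePt (lo k) (hi k) (sgn μ * L) (sgn lam * L) t
  have hbound := fun t a b => hg.abs_sub_ite_le hτ hC₀ hL0 hL (hx t) a b
  have hpt : ∀ t ∈ Set.uIoc (-L) L,
      ‖Real.arcsin (sgn μ * sgn lam *
          coordCos g (lo k) (hi k) (edgePt (lo k) (hi k) (sgn μ * L) (sgn lam * L) t))
        - sgn μ * sgn lam * g (edgePt (lo k) (hi k) (sgn μ * L) (sgn lam * L) t) (lo k) (hi k)‖
        ≤ 2 * (C₀ * L ^ (-τ)) ^ 2 := fun t _ => by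
    rw [Real.norm_eq_abs, coordCos, ← mul_div_assoc]
    refine abs_arcsin_div_sqrt_mul_sub_le hε (by simpa using hbound t (lo k) (lo k))
      (by simpa using hbound t (hi k) (hi k)) ?_
    rw [abs_mul, abs_mul, abs_sgn, abs_sgn, one_mul, one_mul]
    simpa [lo_ne_hi] using hbound t (lo k) (hi k)
  have hG := (hg.continuousOn_entry (lo k) (hi k)).comp_edgePt (a := sgn μ * L)
    (by simpa only [abs_sgn_mul, abs_of_pos hL0] using hL) (lo k) (hi k) (sgn lam * L)
  rw [← intervalIntegral.integral_const_mul, ← intervalIntegral.integral_sub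
    ((hg.continuous_arcsin_coordCos hL k μ lam _).intervalIntegrable _ _)
    ((hG.intervalIntegrable _ _).const_mul _)]
  calc _ ≤ 2 * (C₀ * L ^ (-τ)) ^ 2 * |L - -L| :=
        intervalIntegral.norm_integral_le_of_norm_le_const hpt
    _ = 4 * C₀ ^ 2 * L ^ (1 - 2 * τ) := by
        rw [sub_neg_eq_add, abs_of_pos (by linarith), show 1 - 2 * τ = -τ + -τ + 1 by ring,
          Real.rpow_add hL0, Real.rpow_add hL0, Real.rpow_one]
        ring

end AsymptFlat

/-- The total turning-angle defect of the slices in the x^k-direction in terms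
of face integrals of metric derivatives. -/
theorem turning_angle_face_integrals (τ r₀ C₀ : ℝ) (hτ : 1/2 < τ) (hr₀ : 0 < r₀) (hC₀ : 0 < C₀)
    (g : Pt → Matrix (Fin 3) (Fin 3) ℝ) (hg : AsymptFlat τ r₀ C₀ g) :
    ∃ C > 0, ∃ L₀ > r₀, ∀ L ≥ L₀, ∀ i j k : Fin 3, i ≠ j → i ≠ k → j ≠ k →
      |2 * (∫ t in (-L)..L, (2*π - betaSum g k t L))
       - (-(faceInt i true L (fun x => dg g i j j x))
          + faceInt i false L (fun x => dg g i j j x)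
          - faceInt j true L (fun x => dg g i j i x)
          + faceInt j false L (fun x => dg g i j i x))|
      ≤ C * L ^ (1 - 2*τ) := by
  refine ⟨32 * C₀ ^ 2, by positivity, max (r₀ + 1) ((4 * C₀) ^ τ⁻¹),
    lt_max_of_lt_left (lt_add_one r₀), fun L hL i j k hij hik hjk => ?_⟩
  have hτ0 : 0 < τ := by linarith
  have hrL : r₀ < L := (lt_add_one r₀).trans_le ((le_max_left _ _).trans hL)
  have hL0 : 0 < L := hr₀.trans hrL
  have hε : C₀ * L ^ (-τ) ≤ 1 / 4 := by
    have h4 : 4 * C₀ ≤ L ^ τ := (Real.rpow_inv_le_iff_of_pos (by positivity) hL0.le hτ0).1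
      ((le_max_right _ _).trans hL)
    rw [Real.rpow_neg hL0.le, ← div_eq_mul_inv, div_le_iff₀ (by positivity)]
    linarith
  have hedges : signedEdgeSum g i j L = signedEdgeSum g (lo k) (hi k) L := by
    rcases eq_lo_hi_or_eq_hi_lo hij hik hjk with ⟨rfl, rfl⟩ | ⟨rfl, rfl⟩
    · rfl
    · exact hg.signedEdgeSum_comm hrL hij.symm
  have hvertex := hg.abs_integral_arcsin_coordCos_sub_le hτ0.le hC₀.le hL0 hrL hε k
  rw [hg.faceInt_combination_eq hrL hij, hedges, hg.integral_two_pi_sub_betaSum hrL k]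
  have h₁ := abs_le.1 (hvertex true true)
  have h₂ := abs_le.1 (hvertex true false)
  have h₃ := abs_le.1 (hvertex false true)
  have h₄ := abs_le.1 (hvertex false false)
  simp only [signedEdgeSum, Fintype.sum_bool] at h₁ h₂ h₃ h₄ ⊢
  rw [abs_le]
  constructor <;> linarith
end
end

section
/- There exists a constant C > 0 such that for all x ∈ U, every pair of distinct indices i ≠ j, and all signs μ, λ ∈ {+,−}, | arccos( μλ·g^{ij}(x)/√(g^{ii}(x)·g^{jj}(x)) ) − arccos( −μλ·g_{ij}(x)/√(g_{ii}(x)·g_{jj}(x)) ) | ≤ C·|x|^{−2τ}. (The angle θ between the outward unit normals of two adjacent faces and the corresponding turning angle β of the slicing curve agree up to O(|x|^{−2τ}).) -/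
/-!
Write `g = 1 + E` with entries of `E` bounded by `ε = C₀|x|^(-τ)`. In any normed ring,
`(1 + E)⁻¹ = 1 - E + O(‖E‖²)`, so off the diagonal `g^{ij} = -g_{ij} + O(ε²)` while the diagonal
entries of `g` and `g⁻¹` are `1 + O(ε)`. Hence the two arguments of `arccos` differ by `O(ε²)`, and
`arccos` is 2-Lipschitz on `[-1/2, 1/2]`. Where `ε` is not small, the trivial bound `π` is `O(ε²)`.
-/

open Real MeasureTheory

noncomputable section

section NormedRing

variable {R : Type*} [NormedRing R] [NormOneClass R] {a b : R}

lemma norm_le_two_of_mul_eq_one (hab : a * b = 1) (ha : ‖a - 1‖ ≤ 1 / 2) : ‖b‖ ≤ 2 := by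
  have hb : b = 1 - (a - 1) * b := by rw [sub_mul, hab, one_mul, sub_sub_cancel]
  have : ‖b‖ ≤ 1 + ‖a - 1‖ * ‖b‖ :=
    calc ‖b‖ = ‖1 - (a - 1) * b‖ := congrArg _ hb
      _ ≤ ‖(1 : R)‖ + ‖(a - 1) * b‖ := norm_sub_le _ _
      _ ≤ 1 + ‖a - 1‖ * ‖b‖ := by rw [norm_one]; gcongr; exact norm_mul_le _ _
  nlinarith [norm_nonneg b]

lemma norm_sub_one_le_of_mul_eq_one (hab : a * b = 1) (ha : ‖a - 1‖ ≤ 1 / 2) :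
    ‖b - 1‖ ≤ 2 * ‖a - 1‖ := by
  have : b - 1 = -((a - 1) * b) := by rw [sub_mul, hab, one_mul, neg_sub]
  rw [this, norm_neg, mul_comm]
  exact (norm_mul_le _ _).trans (by gcongr; exact norm_le_two_of_mul_eq_one hab ha)

lemma norm_add_sub_two_le_of_mul_eq_one (hab : a * b = 1) (ha : ‖a - 1‖ ≤ 1 / 2) :
    ‖b + a - 2‖ ≤ 2 * ‖a - 1‖ ^ 2 := by
  have hb : (a - 1) * b = 1 - b := by rw [sub_mul, hab, one_mul]
  calc ‖b + a - 2‖ = ‖(a - 1) * (b - 1)‖ := by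
        rw [← norm_neg, mul_sub, hb, mul_one, ← one_add_one_eq_two]; congr 1; noncomm_ring
    _ ≤ ‖a - 1‖ * (2 * ‖a - 1‖) :=
        (norm_mul_le _ _).trans (by gcongr; exact norm_sub_one_le_of_mul_eq_one hab ha)
    _ = 2 * ‖a - 1‖ ^ 2 := by ring

end NormedRing

lemma abs_arccos_sub_arccos_le_pi (a b : ℝ) : |arccos a - arccos b| ≤ π :=
  abs_sub_le_iff.2 ⟨by linarith [arccos_le_pi a, arccos_nonneg b],
    by linarith [arccos_le_pi b, arccos_nonneg a]⟩

lemma abs_inv_sqrt_sub_one_le {P : ℝ} (hP : 1 / 2 ≤ P) : |(√P)⁻¹ - 1| ≤ |P - 1| := by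
  obtain ⟨r, hr, rfl⟩ : ∃ r : ℝ, 0.7 ≤ r ∧ P = r ^ 2 :=
    ⟨√P, Real.le_sqrt_of_sq_le (by linarith), (sq_sqrt (by linarith)).symm⟩
  have hr0 : 0 < r := by linarith
  rw [sqrt_sq hr0.le]
  calc |r⁻¹ - 1| = |r - 1| / r := by
        rw [show r⁻¹ - 1 = -(r - 1) / r by field_simp; ring, abs_div, abs_neg, abs_of_pos hr0]
    _ ≤ |r - 1| * (r + 1) := by
        rw [div_le_iff₀ hr0, mul_assoc]
        exact le_mul_of_one_le_right (abs_nonneg _) (by nlinarith)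
    _ = |r ^ 2 - 1| := by
        rw [show r ^ 2 - 1 = (r - 1) * (r + 1) by ring, abs_mul,
          abs_of_pos (by linarith : 0 < r + 1)]

lemma abs_mul_sub_one_le {p q δ : ℝ} (hp : |p - 1| ≤ δ) (hq : |q - 1| ≤ δ) (hδ : δ ≤ 1) :
    |p * q - 1| ≤ 3 * δ := by
  have : p * q - 1 = (p - 1) * (q - 1) + (p - 1) + (q - 1) := by ring
  rw [this]
  calc _ ≤ |p - 1| * |q - 1| + |p - 1| + |q - 1| := by
        rw [← abs_mul]; exact abs_add_three _ _ _
    _ ≤ δ * 1 + δ + δ := by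
        gcongr
        · exact (abs_nonneg _).trans hp
        · linarith
    _ = 3 * δ := by ring

lemma abs_arccos_sub_arccos_le_two_mul {a b : ℝ} (ha : |a| ≤ 1 / 2) (hb : |b| ≤ 1 / 2) :
    |arccos a - arccos b| ≤ 2 * |a - b| := by
  have hmem : ∀ {c : ℝ}, |c| ≤ 1 / 2 → c ∈ Set.Icc (-(1 / 2) : ℝ) (1 / 2) := fun hc =>
    abs_le.1 hc
  have hderiv : ∀ y ∈ Set.Icc (-(1 / 2) : ℝ) (1 / 2),
      HasDerivWithinAt arccos (-(1 / √(1 - y ^ 2))) (Set.Icc (-(1 / 2)) (1 / 2)) y :=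
    fun y hy => (hasDerivAt_arccos (by linarith [hy.1]) (by linarith [hy.2])).hasDerivWithinAt
  have hbound : ∀ y ∈ Set.Icc (-(1 / 2) : ℝ) (1 / 2), ‖-(1 / √(1 - y ^ 2))‖ ≤ 2 := by
    intro y hy
    have : 1 / 2 ≤ √(1 - y ^ 2) := Real.le_sqrt_of_sq_le (by nlinarith [hy.1, hy.2])
    rw [norm_neg, Real.norm_eq_abs, abs_of_nonneg (by positivity), div_le_iff₀ (by linarith)]
    linarith
  simpa only [Real.norm_eq_abs] using
    (convex_Icc _ _).norm_image_sub_le_of_norm_hasDerivWithin_le hderiv hbound (hmem hb) (hmem ha)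

lemma abs_arccos_div_sqrt_sub_arccos_div_sqrt_le {δ s u v p q p' q' : ℝ} (hδ : δ ≤ 1 / 12)
    (hs : |s| = 1) (hu : |u| ≤ 2 * δ) (hv : |v| ≤ δ) (huv : |u + v| ≤ 2 * δ ^ 2)
    (hp : |p - 1| ≤ 2 * δ) (hq : |q - 1| ≤ 2 * δ) (hp' : |p' - 1| ≤ δ) (hq' : |q' - 1| ≤ δ) :
    |arccos (s * u / √(p * q)) - arccos (-s * v / √(p' * q'))| ≤ 34 * δ ^ 2 := by
  have hδ0 : 0 ≤ δ := (abs_nonneg v).trans hv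
  have hP : |p * q - 1| ≤ 6 * δ := by
    have := abs_mul_sub_one_le hp hq (by linarith); linarith
  have hQ : |p' * q' - 1| ≤ 3 * δ := abs_mul_sub_one_le hp' hq' (by linarith)
  have hx := abs_inv_sqrt_sub_one_le (P := p * q) (by linarith [(abs_le.1 hP).1])
  have hy := abs_inv_sqrt_sub_one_le (P := p' * q') (by linarith [(abs_le.1 hQ).1])
  set x := (√(p * q))⁻¹
  set y := (√(p' * q'))⁻¹
  have hux : |u * (x - 1)| ≤ 2 * δ * (6 * δ) := by
    rw [abs_mul]; exact mul_le_mul hu (hx.trans hP) (abs_nonneg _) (by linarith)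
  have hvy : |v * (y - 1)| ≤ δ * (3 * δ) := by
    rw [abs_mul]; exact mul_le_mul hv (hy.trans hQ) (abs_nonneg _) hδ0
  have ha : |s * u / √(p * q)| ≤ 1 / 2 := by
    rw [div_eq_mul_inv, mul_assoc, abs_mul, hs, one_mul,
      show u * x = u + u * (x - 1) by ring]
    nlinarith [abs_add_le u (u * (x - 1))]
  have hb : |-s * v / √(p' * q')| ≤ 1 / 2 := by
    rw [div_eq_mul_inv, mul_assoc, abs_mul, abs_neg, hs, one_mul,
      show v * y = v + v * (y - 1) by ring]
    nlinarith [abs_add_le v (v * (y - 1))]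
  have hab : s * u / √(p * q) - -s * v / √(p' * q') =
      s * ((u + v) + u * (x - 1) + v * (y - 1)) := by
    simp only [div_eq_mul_inv, x, y]; ring
  calc _ ≤ 2 * |s * u / √(p * q) - -s * v / √(p' * q')| := abs_arccos_sub_arccos_le_two_mul ha hb
    _ ≤ 2 * (2 * δ ^ 2 + 2 * δ * (6 * δ) + δ * (3 * δ)) := by
        rw [hab, abs_mul, hs, one_mul]
        gcongr
        exact (abs_add_three _ _ _).trans (by linarith)
    _ = 34 * δ ^ 2 := by ring

section LinftyOpNorm

-- The `ℓ∞` operator norm is submultiplicative, has `‖1‖ = 1` and dominates every entry.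
attribute [local instance] Matrix.linftyOpNormedAddCommGroup Matrix.linftyOpNormedRing

variable {n : Type*} [Fintype n]

lemma Matrix.abs_apply_le_linfty_opNorm (M : Matrix n n ℝ) (i j : n) : |M i j| ≤ ‖M‖ := by
  rw [Matrix.linfty_opNorm_def, ← Real.norm_eq_abs, ← coe_nnnorm, NNReal.coe_le_coe]
  exact (Finset.single_le_sum (fun _ _ => zero_le) (Finset.mem_univ j)).trans
    (Finset.le_sup (f := fun i => ∑ j, ‖M i j‖₊) (Finset.mem_univ i))

lemma Matrix.linfty_opNorm_le_card_mul {M : Matrix n n ℝ} {ε : ℝ} (hε : 0 ≤ ε)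
    (hM : ∀ i j, |M i j| ≤ ε) : ‖M‖ ≤ Fintype.card n * ε := by
  lift ε to NNReal using hε
  rw [Matrix.linfty_opNorm_def]
  norm_cast
  refine Finset.sup_le fun i _ => ?_
  calc ∑ j, ‖M i j‖₊ ≤ ∑ _j : n, ε := Finset.sum_le_sum fun j _ => by
        rw [← NNReal.coe_le_coe, coe_nnnorm]; exact hM i j
    _ = Fintype.card n * ε := by simp

lemma Matrix.abs_arccos_inv_sub_arccos_le [DecidableEq n] {A : Matrix n n ℝ} (hA : IsUnit A.det)
    {ε : ℝ} (hε : Fintype.card n * ε ≤ 1 / 12)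
    (hA1 : ∀ i j, |A i j - (1 : Matrix n n ℝ) i j| ≤ ε)
    {i j : n} (hij : i ≠ j) {s : ℝ} (hs : |s| = 1) :
    |arccos (s * A⁻¹ i j / √(A⁻¹ i i * A⁻¹ j j)) - arccos (-s * A i j / √(A i i * A j j))| ≤
      34 * (Fintype.card n * ε) ^ 2 := by
  have : Nonempty n := ⟨i⟩
  have hδ : ‖A - 1‖ ≤ Fintype.card n * ε :=
    Matrix.linfty_opNorm_le_card_mul ((abs_nonneg _).trans (hA1 i i)) hA1
  have hmul : A * A⁻¹ = 1 := Matrix.mul_nonsing_inv A hA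
  have hhalf : ‖A - 1‖ ≤ 1 / 2 := by linarith
  have hE (k l : n) := (A - 1).abs_apply_le_linfty_opNorm k l
  have hI (k l : n) := ((A⁻¹ - 1).abs_apply_le_linfty_opNorm k l).trans
    (norm_sub_one_le_of_mul_eq_one hmul hhalf)
  have hsum := ((A⁻¹ + A - 2).abs_apply_le_linfty_opNorm i j).trans
    (norm_add_sub_two_le_of_mul_eq_one hmul hhalf)
  refine (abs_arccos_div_sqrt_sub_arccos_div_sqrt_le (δ := ‖A - 1‖) (by linarith) hs
    (by simpa [one_apply_ne hij] using hI i j) (by simpa [one_apply_ne hij] using hE i j)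
    (by simpa [ofNat_apply, hij] using hsum) (by simpa using hI i i) (by simpa using hI j j)
    (by simpa using hE i i) (by simpa using hE j j)).trans (by gcongr)

end LinftyOpNorm

theorem theta_beta_comparison_general (τ r₀ C₀ : ℝ) (hC₀ : 0 < C₀)
    (g : Pt → Matrix (Fin 3) (Fin 3) ℝ) (hg : AsymptFlat τ r₀ C₀ g) :
    ∃ C > 0, ∀ x : Pt, r₀ < enorm3 x → ∀ i j : Fin 3, i ≠ j → ∀ μ lam : Bool,
      |Real.arccos (sgn μ * sgn lam * (g x)⁻¹ i j /
          Real.sqrt ((g x)⁻¹ i i * (g x)⁻¹ j j))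
       - Real.arccos (-(sgn μ * sgn lam) * g x i j /
          Real.sqrt (g x i i * g x j j))|
      ≤ C * enorm3 x ^ (-(2*τ)) := by
  obtain ⟨-, hpd, -, hclose, -, -⟩ := hg
  refine ⟨(36 * C₀) ^ 2 * π, by positivity, fun x hx i j hij μ lam => ?_⟩
  set ε := C₀ * enorm3 x ^ (-τ) with hε
  have hrate : (36 * C₀) ^ 2 * π * enorm3 x ^ (-(2 * τ)) = (36 * ε) ^ 2 * π := by
    rw [hε, show -(2 * τ) = -τ * (2 : ℕ) by push_cast; ring,
      rpow_mul (x := enorm3 x) (sqrt_nonneg _), rpow_natCast]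
    ring
  rw [hrate]
  rcases le_or_gt (36 * ε) 1 with hsmall | hlarge
  · have hA1 (k l : Fin 3) : |g x k l - (1 : Matrix (Fin 3) (Fin 3) ℝ) k l| ≤ ε := by
      rw [Matrix.one_apply]; exact hclose x hx k l
    calc _ ≤ 34 * (Fintype.card (Fin 3) * ε) ^ 2 :=
          Matrix.abs_arccos_inv_sub_arccos_le (isUnit_iff_ne_zero.2 (hpd x hx).det_pos.ne')
            (by rw [Fintype.card_fin]; linarith) hA1 hij
            (by rw [abs_mul, abs_sgn, abs_sgn, one_mul])
      _ ≤ (36 * ε) ^ 2 * π := by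
          rw [Fintype.card_fin]; push_cast; nlinarith [pi_gt_three, sq_nonneg ε]
  · calc _ ≤ π := abs_arccos_sub_arccos_le_pi _ _
      _ ≤ (36 * ε) ^ 2 * π := le_mul_of_one_le_left pi_pos.le (one_le_pow₀ hlarge.le)

/-- The dihedral-normal angle θ and the corresponding turning angle β agree up to
O(|x|^(-2τ)). -/
theorem theta_beta_comparison (τ r₀ C₀ : ℝ) (hτ : 1/2 < τ) (hr₀ : 0 < r₀) (hC₀ : 0 < C₀)
    (g : Pt → Matrix (Fin 3) (Fin 3) ℝ) (hg : AsymptFlat τ r₀ C₀ g) :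
    ∃ C > 0, ∀ x : Pt, r₀ < enorm3 x → ∀ i j : Fin 3, i ≠ j → ∀ μ lam : Bool,
      |Real.arccos (sgn μ * sgn lam * (g x)⁻¹ i j /
          Real.sqrt ((g x)⁻¹ i i * (g x)⁻¹ j j))
       - Real.arccos (-(sgn μ * sgn lam) * g x i j /
          Real.sqrt (g x i i * g x j j))|
      ≤ C * enorm3 x ^ (-(2*τ)) :=
  theta_beta_comparison_general τ r₀ C₀ hC₀ g hg
end
end
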